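/- arXiv:1501.07592 — 6 statements merged into one kernel-verified Lean document; each statement's English description precedes it below -/
import Mathlib

section
/- Let R_• be a simplicial ring. Setting M = (ker d₀ ⊆ R₁)/im(d₂ restricted to ker d₀ ∩ ker d₁ in R₂) and letting R₀ act on ker d₀ by r₀ · m · r₁ = s₀(r₀) m s₀(r₁), the induced map ∂ : M → R₀ given by d₁ is a crossed bimodule. In particular, for m, m' ∈ ker d₀ ⊆ R₁, the element s₀d₁(m)m' - m s₀d₁(m') equals d₂(s₀(m)s₁(m') - s₁(m)s₀(m')), which lies in im(d₂). -/
/-- A bimodule structure: left and right actions of a ring `R` on an abelian group `M`. -/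
structure BimoduleStr (R : Type*) (M : Type*) [Ring R] [AddCommGroup M] where
  sl : R → M → M
  sr : M → R → M
  sl_add : ∀ r m m', sl r (m + m') = sl r m + sl r m'
  add_sl : ∀ r r' m, sl (r + r') m = sl r m + sl r' m
  mul_sl : ∀ r r' m, sl (r * r') m = sl r (sl r' m)
  one_sl : ∀ m, sl 1 m = m
  sr_add : ∀ m m' r, sr (m + m') r = sr m r + sr m' r
  add_sr : ∀ m r r', sr m (r + r') = sr m r + sr m r'
  mul_sr : ∀ m r r', sr m (r * r') = sr (sr m r) r'
  one_sr : ∀ m, sr m 1 = m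
  sl_sr : ∀ r m r', sl r (sr m r') = sr (sl r m) r'

/-- A crossed bimodule: an `R`-bimodule map `∂ : M → R` satisfying the Pfeiffer identity. -/
structure CrossedBimodule (R : Type*) (M : Type*) [Ring R] [AddCommGroup M] extends
    BimoduleStr R M where
  d : M →+ R
  d_sl : ∀ r m, d (sl r m) = r * d m
  d_sr : ∀ m r, d (sr m r) = d m * r
  pfeiffer : ∀ m m', sl (d m) m' = sr m (d m')

/-- for a simplicial ring (of which we record the low-dimensional part
`R0, R1, R2` with its face and degeneracy ring homomorphisms, subject to the simplicial
identities), the truncated Moore complex `M = ker d₀ / d₂(ker d₀ ∩ ker d₁) → R₀`, with `R₀`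
acting by `r₀ · m · r₁ = s₀(r₀) m s₀(r₁)` and differential induced by `d₁`, is a crossed
bimodule.  In particular, for `m, m' ∈ ker d₀ ⊆ R₁` one has
`s₀d₁(m)m' - m s₀d₁(m') = d₂(s₀(m)s₁(m') - s₁(m)s₀(m'))` with the argument of `d₂` lying in
`ker d₀ ∩ ker d₁ ⊆ R₂`. -/
theorem stmt7 {R0 R1 R2 : Type*} [Ring R0] [Ring R1] [Ring R2]
    (d10 d11 : R1 →+* R0) (d20 d21 d22 : R2 →+* R1)
    (s00 : R0 →+* R1) (s10 s11 : R1 →+* R2)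
    -- simplicial identities
    (hds1 : ∀ r, d10 (s00 r) = r) (hds2 : ∀ r, d11 (s00 r) = r)
    (hds3 : ∀ x, d20 (s10 x) = x) (hds4 : ∀ x, d21 (s10 x) = x)
    (hds5 : ∀ x, d22 (s10 x) = s00 (d11 x))
    (hds6 : ∀ x, d20 (s11 x) = s00 (d10 x))
    (hds7 : ∀ x, d21 (s11 x) = x) (hds8 : ∀ x, d22 (s11 x) = x)
    (hdd1 : ∀ z, d10 (d20 z) = d10 (d21 z))
    (hdd2 : ∀ z, d10 (d22 z) = d11 (d20 z))
    (hdd3 : ∀ z, d11 (d22 z) = d11 (d21 z))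
    (hss : ∀ r, s10 (s00 r) = s11 (s00 r)) :
    -- the displayed identity in `R1`
    (∀ m m' : R1, s00 (d11 m) * m' - m * s00 (d11 m')
        = d22 (s10 m * s11 m' - s11 m * s10 m')) ∧
    -- its argument lies in `ker d₀ ∩ ker d₁ ⊆ R₂` when `m, m' ∈ ker d₀`
    (∀ m m' : R1, d10 m = 0 → d10 m' = 0 →
        d20 (s10 m * s11 m' - s11 m * s10 m') = 0 ∧
        d21 (s10 m * s11 m' - s11 m * s10 m') = 0) ∧
    -- the truncated Moore complex is a crossed bimodule
    (∃ C : CrossedBimodule R0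
        (↥(AddMonoidHom.ker d10.toAddMonoidHom) ⧸
          ((AddSubgroup.map d22.toAddMonoidHom
              (AddMonoidHom.ker d20.toAddMonoidHom ⊓
                AddMonoidHom.ker d21.toAddMonoidHom)).addSubgroupOf
            (AddMonoidHom.ker d10.toAddMonoidHom))),
      (∀ (r : R0) (m : AddMonoidHom.ker d10.toAddMonoidHom),
        ∃ h : s00 r * (m : R1) ∈ AddMonoidHom.ker d10.toAddMonoidHom,
          C.sl r (QuotientAddGroup.mk m) = QuotientAddGroup.mk ⟨s00 r * (m : R1), h⟩) ∧
      (∀ (m : AddMonoidHom.ker d10.toAddMonoidHom) (r : R0),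
        ∃ h : (m : R1) * s00 r ∈ AddMonoidHom.ker d10.toAddMonoidHom,
          C.sr (QuotientAddGroup.mk m) r = QuotientAddGroup.mk ⟨(m : R1) * s00 r, h⟩) ∧
      (∀ m : AddMonoidHom.ker d10.toAddMonoidHom,
        C.d (QuotientAddGroup.mk m) = d11 (m : R1))) := by
  have key : ∀ m m' : R1, s00 (d11 m) * m' - m * s00 (d11 m')
      = d22 (s10 m * s11 m' - s11 m * s10 m') := by
    intro m m'
    rw [map_sub, map_mul, map_mul, hds5, hds8, hds8, hds5]
  have keyker : ∀ m m' : R1, d10 m = 0 → d10 m' = 0 →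
      d20 (s10 m * s11 m' - s11 m * s10 m') = 0 ∧
      d21 (s10 m * s11 m' - s11 m * s10 m') = 0 := by
    intro m m' hm hm'
    constructor
    · rw [map_sub, map_mul, map_mul, hds3, hds6, hds6, hds3, hm, hm',
        map_zero, mul_zero, zero_mul, sub_zero]
    · rw [map_sub, map_mul, map_mul, hds4, hds7, hds7, hds4, sub_self]
  refine ⟨key, keyker, ?_⟩
  set K : AddSubgroup R1 := AddMonoidHom.ker d10.toAddMonoidHom with hKdef
  set N0 : AddSubgroup R1 := AddSubgroup.map d22.toAddMonoidHom
      (AddMonoidHom.ker d20.toAddMonoidHom ⊓ AddMonoidHom.ker d21.toAddMonoidHom) with hN0def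
  set N : AddSubgroup K := N0.addSubgroupOf K with hNdef
  have memK : ∀ x : R1, x ∈ K ↔ d10 x = 0 := fun x => Iff.rfl
  have memN0 : ∀ x : R1, x ∈ N0 ↔ ∃ z : R2, (d20 z = 0 ∧ d21 z = 0) ∧ d22 z = x := by
    intro x
    simp [hN0def, AddSubgroup.mem_map, AddMonoidHom.mem_ker]
  have hmemL : ∀ (r : R0) (m : K), s00 r * (m : R1) ∈ K := by
    intro r m
    have hm : d10 (m : R1) = 0 := m.2
    show d10 (s00 r * (m : R1)) = 0
    rw [map_mul, hm, mul_zero]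
  have hmemR : ∀ (m : K) (r : R0), (m : R1) * s00 r ∈ K := by
    intro m r
    have hm : d10 (m : R1) = 0 := m.2
    show d10 ((m : R1) * s00 r) = 0
    rw [map_mul, hm, zero_mul]
  let slK : R0 → K →+ K := fun r =>
    { toFun := fun m => ⟨s00 r * (m : R1), hmemL r m⟩
      map_zero' := by ext; simp
      map_add' := by intro a b; ext; simp [mul_add] }
  let srK : R0 → K →+ K := fun r =>
    { toFun := fun m => ⟨(m : R1) * s00 r, hmemR m r⟩
      map_zero' := by ext; simp
      map_add' := by intro a b; ext; simp [add_mul] }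
  have hNsl : ∀ r, N ≤ N.comap (slK r) := by
    intro r k hk
    rw [AddSubgroup.mem_comap]
    rw [hNdef, AddSubgroup.mem_addSubgroupOf, memN0] at hk ⊢
    obtain ⟨z, ⟨hz0, hz1⟩, hz2⟩ := hk
    refine ⟨s10 (s00 r) * z, ⟨?_, ?_⟩, ?_⟩
    · rw [map_mul, hds3, hz0, mul_zero]
    · rw [map_mul, hds4, hz1, mul_zero]
    · show d22 (s10 (s00 r) * z) = s00 r * (k : R1)
      rw [map_mul, hds5, hds2, hz2]
  have hNsr : ∀ r, N ≤ N.comap (srK r) := by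
    intro r k hk
    rw [AddSubgroup.mem_comap]
    rw [hNdef, AddSubgroup.mem_addSubgroupOf, memN0] at hk ⊢
    obtain ⟨z, ⟨hz0, hz1⟩, hz2⟩ := hk
    refine ⟨z * s11 (s00 r), ⟨?_, ?_⟩, ?_⟩
    · rw [map_mul, hz0, zero_mul]
    · rw [map_mul, hds7, hz1, zero_mul]
    · show d22 (z * s11 (s00 r)) = (k : R1) * s00 r
      rw [map_mul, hds8, hz2]
  let dK : K →+ R0 := d11.toAddMonoidHom.comp K.subtype
  have hdK : ∀ x ∈ N, dK x = 0 := by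
    intro x hx
    rw [hNdef, AddSubgroup.mem_addSubgroupOf, memN0] at hx
    obtain ⟨z, ⟨hz0, hz1⟩, hz2⟩ := hx
    show d11 (x : R1) = 0
    rw [← hz2, hdd3, hz1, map_zero]
  let sl : R0 → K ⧸ N → K ⧸ N := fun r => QuotientAddGroup.map N N (slK r) (hNsl r)
  let sr : K ⧸ N → R0 → K ⧸ N := fun m r => QuotientAddGroup.map N N (srK r) (hNsr r) m
  have sl_mk : ∀ (r : R0) (m : K), sl r (QuotientAddGroup.mk m)
      = QuotientAddGroup.mk ⟨s00 r * (m : R1), hmemL r m⟩ := fun r m => rfl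
  have sr_mk : ∀ (m : K) (r : R0), sr (QuotientAddGroup.mk m) r
      = QuotientAddGroup.mk ⟨(m : R1) * s00 r, hmemR m r⟩ := fun m r => rfl
  refine ⟨{ sl := sl, sr := sr
            sl_add := fun r m m' => map_add (QuotientAddGroup.map N N (slK r) (hNsl r)) m m'
            sr_add := fun m m' r => map_add (QuotientAddGroup.map N N (srK r) (hNsr r)) m m'
            add_sl := ?_, mul_sl := ?_, one_sl := ?_
            add_sr := ?_, mul_sr := ?_, one_sr := ?_, sl_sr := ?_
            d := QuotientAddGroup.lift N dK hdK
            d_sl := ?_, d_sr := ?_, pfeiffer := ?_ },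
        fun r m => ⟨hmemL r m, sl_mk r m⟩,
        fun m r => ⟨hmemR m r, sr_mk m r⟩,
        fun m => rfl⟩
  · intro r r' m
    induction m using QuotientAddGroup.induction_on with
    | H m =>
      rw [sl_mk, sl_mk, sl_mk, ← QuotientAddGroup.mk_add]
      congr 1
      ext
      show s00 (r + r') * (m : R1) = s00 r * (m : R1) + s00 r' * (m : R1)
      rw [map_add, add_mul]
  · intro r r' m
    induction m using QuotientAddGroup.induction_on with
    | H m =>
      rw [sl_mk, sl_mk, sl_mk]
      congr 1
      ext
      show s00 (r * r') * (m : R1) = s00 r * (s00 r' * (m : R1))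
      rw [map_mul, mul_assoc]
  · intro m
    induction m using QuotientAddGroup.induction_on with
    | H m =>
      rw [sl_mk]
      congr 1
      ext
      show s00 1 * (m : R1) = (m : R1)
      rw [map_one, one_mul]
  · intro m r r'
    induction m using QuotientAddGroup.induction_on with
    | H m =>
      rw [sr_mk, sr_mk, sr_mk, ← QuotientAddGroup.mk_add]
      congr 1
      ext
      show (m : R1) * s00 (r + r') = (m : R1) * s00 r + (m : R1) * s00 r'
      rw [map_add, mul_add]
  · intro m r r'
    induction m using QuotientAddGroup.induction_on with
    | H m =>
      rw [sr_mk, sr_mk, sr_mk]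
      congr 1
      ext
      show (m : R1) * s00 (r * r') = ((m : R1) * s00 r) * s00 r'
      rw [map_mul, mul_assoc]
  · intro m
    induction m using QuotientAddGroup.induction_on with
    | H m =>
      rw [sr_mk]
      congr 1
      ext
      show (m : R1) * s00 1 = (m : R1)
      rw [map_one, mul_one]
  · intro r m r'
    induction m using QuotientAddGroup.induction_on with
    | H m =>
      rw [sr_mk, sl_mk, sl_mk, sr_mk]
      congr 1
      ext
      show s00 r * ((m : R1) * s00 r') = (s00 r * (m : R1)) * s00 r'
      rw [mul_assoc]
  · intro r m
    induction m using QuotientAddGroup.induction_on with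
    | H m =>
      show QuotientAddGroup.lift N dK hdK (sl r (QuotientAddGroup.mk m))
        = r * QuotientAddGroup.lift N dK hdK (QuotientAddGroup.mk m)
      rw [sl_mk]
      show d11 (s00 r * (m : R1)) = r * d11 (m : R1)
      rw [map_mul, hds2]
  · intro m r
    induction m using QuotientAddGroup.induction_on with
    | H m =>
      show QuotientAddGroup.lift N dK hdK (sr (QuotientAddGroup.mk m) r)
        = QuotientAddGroup.lift N dK hdK (QuotientAddGroup.mk m) * r
      rw [sr_mk]
      show d11 ((m : R1) * s00 r) = d11 (m : R1) * r
      rw [map_mul, hds2]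
  · intro m m'
    induction m using QuotientAddGroup.induction_on with
    | H m =>
      induction m' using QuotientAddGroup.induction_on with
      | H m' =>
        show sl (d11 (m : R1)) (QuotientAddGroup.mk m')
          = sr (QuotientAddGroup.mk m) (d11 (m' : R1))
        rw [sl_mk, sr_mk, QuotientAddGroup.eq_iff_sub_mem]
        rw [hNdef, AddSubgroup.mem_addSubgroupOf, memN0]
        refine ⟨s10 (m : R1) * s11 (m' : R1) - s11 (m : R1) * s10 (m' : R1),
          ⟨(keyker _ _ m.2 m'.2).1, (keyker _ _ m.2 m'.2).2⟩, ?_⟩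
        show d22 _ = s00 (d11 (m : R1)) * (m' : R1) - (m : R1) * s00 (d11 (m' : R1))
        rw [← key]
end

section
/- Let [S_•, E, R_•] be a bimodule butterfly and let E₁ = N ⊕_S E = {(n, e) ∈ N ⊕ E : ∂n = π(e)} be the pullback. Then E₁ is an E-bimodule via e₀·(n, e)·e₁ = (π(e₀)·n·π(e₁), e₀ e e₁), the map ∂_E : E₁ → E, ∂_E(n, e) = e makes E₁ → E a crossed bimodule, and the Pfeiffer identity ∂(n₀, e₀)·(n₁, e₁) = (n₀, e₀)·∂(n₁, e₁) holds. -/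
/-- A bimodule butterfly from the crossed bimodule `CS : N → S` to the crossed bimodule
`CR : M → R`, with centerpiece ring `E`: the NE-SW diagonal `0 → M → E → S → 0` is a ring
extension, the NW-SE diagonal `N → E → R` is a complex with `j` a ring homomorphism, both
diagonals are compatible with the differentials, and the four compatibility conditions hold. -/
structure Butterfly {S N R M : Type*} [Ring S] [AddCommGroup N] [Ring R] [AddCommGroup M]
    (CS : CrossedBimodule S N) (CR : CrossedBimodule R M)
    (E : Type*) [Ring E] where
  ι : M →+ E
  π : E →+* S
  κ : N →+ E
  j : E →+* R
  ι_inj : Function.Injective ι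
  π_surj : Function.Surjective π
  exact : ∀ e, π e = 0 ↔ ∃ m, ι m = e
  jκ : ∀ n, j (κ n) = 0
  πκ : ∀ n, π (κ n) = CS.d n
  jι : ∀ m, j (ι m) = CR.d m
  compat₁ : ∀ m e, ι (CR.sr m (j e)) = ι m * e
  compat₂ : ∀ m e, ι (CR.sl (j e) m) = e * ι m
  compat₃ : ∀ n e, κ (CS.sr n (π e)) = κ n * e
  compat₄ : ∀ n e, κ (CS.sl (π e) n) = e * κ n

/-- The pullback `N ⊕_S E = {(n, e) | ∂n = π(e)}`, as an additive subgroup of `N × E`. -/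
def fiberSub {S N E : Type*} [Ring S] [AddCommGroup N] [Ring E]
    (dN : N →+ S) (π : E →+* S) : AddSubgroup (N × E) where
  carrier := {p | dN p.1 = π p.2}
  add_mem' := by
    intro a b ha hb
    simp only [Set.mem_setOf_eq, Prod.fst_add, Prod.snd_add, map_add] at *
    rw [ha, hb]
  zero_mem' := by simp
  neg_mem' := by
    intro a ha
    simp only [Set.mem_setOf_eq, Prod.fst_neg, Prod.snd_neg, map_neg] at *
    rw [ha]

theorem mem_fiberSub {S N E : Type*} [Ring S] [AddCommGroup N] [Ring E]
    (dN : N →+ S) (π : E →+* S) (p : N × E) :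
    p ∈ fiberSub dN π ↔ dN p.1 = π p.2 := Iff.rfl

/-- for a bimodule butterfly, the pullback `E₁ = N ⊕_S E` is an `E`-bimodule
via `e₀·(n,e)·e₁ = (π(e₀)·n·π(e₁), e₀ e e₁)`, and with the differential `(n, e) ↦ e` it is a
crossed bimodule over `E` (in particular the Pfeiffer identity holds, as part of the
`CrossedBimodule` structure). -/
theorem stmt13 {S N R M E : Type*} [Ring S] [AddCommGroup N] [Ring R] [AddCommGroup M]
    [Ring E] (CS : CrossedBimodule S N) (CR : CrossedBimodule R M)
    (B : Butterfly CS CR E) :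
    ∃ CB : CrossedBimodule E (fiberSub CS.d B.π),
      (∀ (e₀ : E) (p : fiberSub CS.d B.π),
        ∃ h : ((CS.sl (B.π e₀) p.val.1, e₀ * p.val.2) : N × E) ∈ fiberSub CS.d B.π,
          CB.sl e₀ p = ⟨(CS.sl (B.π e₀) p.val.1, e₀ * p.val.2), h⟩) ∧
      (∀ (p : fiberSub CS.d B.π) (e₁ : E),
        ∃ h : ((CS.sr p.val.1 (B.π e₁), p.val.2 * e₁) : N × E) ∈ fiberSub CS.d B.π,
          CB.sr p e₁ = ⟨(CS.sr p.val.1 (B.π e₁), p.val.2 * e₁), h⟩) ∧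
      (∀ p : fiberSub CS.d B.π, CB.d p = p.val.2) := by
  classical
  have memsl : ∀ (e₀ : E) (p : fiberSub CS.d B.π),
      ((CS.sl (B.π e₀) p.val.1, e₀ * p.val.2) : N × E) ∈ fiberSub CS.d B.π := by
    intro e₀ p
    have h := p.2
    rw [mem_fiberSub] at h ⊢
    simp [CS.d_sl, h, map_mul]
  have memsr : ∀ (p : fiberSub CS.d B.π) (e₁ : E),
      ((CS.sr p.val.1 (B.π e₁), p.val.2 * e₁) : N × E) ∈ fiberSub CS.d B.π := by
    intro p e₁
    have h := p.2
    rw [mem_fiberSub] at h ⊢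
    simp [CS.d_sr, h, map_mul]
  refine ⟨{
    sl := fun e₀ p => ⟨(CS.sl (B.π e₀) p.val.1, e₀ * p.val.2), memsl e₀ p⟩
    sr := fun p e₁ => ⟨(CS.sr p.val.1 (B.π e₁), p.val.2 * e₁), memsr p e₁⟩
    sl_add := by
      intro r m m'
      apply Subtype.ext
      simp [Prod.ext_iff, CS.sl_add, mul_add]
    add_sl := by
      intro r r' m
      apply Subtype.ext
      simp [Prod.ext_iff, CS.add_sl, add_mul]
    mul_sl := by
      intro r r' m
      apply Subtype.ext
      simp [Prod.ext_iff, CS.mul_sl, mul_assoc, map_mul]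
    one_sl := by
      intro m
      apply Subtype.ext
      simp [Prod.ext_iff, CS.one_sl]
    sr_add := by
      intro m m' r
      apply Subtype.ext
      simp [Prod.ext_iff, CS.sr_add, add_mul]
    add_sr := by
      intro m r r'
      apply Subtype.ext
      simp [Prod.ext_iff, CS.add_sr, mul_add]
    mul_sr := by
      intro m r r'
      apply Subtype.ext
      simp [Prod.ext_iff, CS.mul_sr, mul_assoc, map_mul]
    one_sr := by
      intro m
      apply Subtype.ext
      simp [Prod.ext_iff, CS.one_sr]
    sl_sr := by
      intro r m r'
      apply Subtype.ext
      simp [Prod.ext_iff, CS.sl_sr, mul_assoc]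
    d := {
      toFun := fun p => p.val.2
      map_zero' := rfl
      map_add' := fun _ _ => rfl }
    d_sl := fun r m => rfl
    d_sr := fun m r => rfl
    pfeiffer := by
      intro p p'
      apply Subtype.ext
      have h := p.2
      have h' := p'.2
      rw [mem_fiberSub] at h h'
      simp only [Prod.ext_iff]
      refine ⟨?_, rfl⟩
      show CS.sl (B.π p.val.2) p'.val.1 = CS.sr p.val.1 (B.π p'.val.2)
      rw [← h, ← h', CS.pfeiffer] }, ?_, ?_, ?_⟩
  · intro e₀ p; exact ⟨memsl e₀ p, rfl⟩
  · intro p e₁; exact ⟨memsr p e₁, rfl⟩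
  · intro p; rfl
end

section
/- Let [S_•, E, R_•] be a bimodule butterfly and E_• the crossed bimodule E₁ = N ⊕_S E → E with wings as above. Then the left wing (π̃, π) : E_• → S_• (where π̃(n, e) = n) is a morphism of crossed bimodules inducing isomorphisms on π₀ and π₁: ker(∂ : N → S) ≅ ker(E₁ → E) and coker(∂ : N → S) ≅ coker(E₁ → E). -/
/-- the left wing `(π̃, π) : (E₁ → E) → (N → S)` of a bimodule butterfly,
where `π̃(n, e) = n` and the differential of `E₁ = N ⊕_S E` is `(n, e) ↦ e`, is a morphism
of crossed bimodules which is a quasi-isomorphism: it commutes with the differentials, is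
compatible with the actions, induces a bijection on kernels (`π₁`) and a bijection on
cokernels (`π₀`), the latter expressed elementwise. -/
theorem stmt15 {S N R M E : Type*} [Ring S] [AddCommGroup N] [Ring R] [AddCommGroup M]
    [Ring E] (CS : CrossedBimodule S N) (CR : CrossedBimodule R M)
    (B : Butterfly CS CR E) :
    -- `(π̃, π)` commutes with the differentials
    (∀ p : fiberSub CS.d B.π, CS.d p.val.1 = B.π p.val.2) ∧
    -- equivariance of `π̃` with respect to the `E`-action `e₀·(n,e)·e₁` and the `S`-action
    (∀ (e₀ e₁ : E) (p : fiberSub CS.d B.π),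
        (CS.sl (B.π e₀) (CS.sr p.val.1 (B.π e₁)), e₀ * p.val.2 * e₁) ∈ fiberSub CS.d B.π) ∧
    -- bijection on `π₁`: kernel of `E₁ → E` maps bijectively onto `ker ∂ ⊆ N`
    Function.Bijective (fun q : {p : fiberSub CS.d B.π // p.val.2 = 0} =>
      (⟨q.val.val.1, by
          have h := (mem_fiberSub CS.d B.π q.val.val).1 q.val.property
          rw [q.property] at h
          simpa using h⟩ : {n : N // CS.d n = 0})) ∧
    -- bijection on `π₀`, elementwise: surjectivity of the induced map on cokernels
    (∀ s : S, ∃ e : E, B.π e = s) ∧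
    -- and injectivity of the induced map on cokernels
    (∀ e : E, (∃ n : N, CS.d n = B.π e) → ∃ p : fiberSub CS.d B.π, p.val.2 = e) := by
  refine ⟨fun p => p.property, ?_, ⟨?_, ?_⟩, B.π_surj, ?_⟩
  · intro e₀ e₁ p
    have hp : CS.d p.val.1 = B.π p.val.2 := p.property
    simp [mem_fiberSub, CS.d_sl, CS.d_sr, hp, mul_assoc]
  · rintro ⟨⟨⟨n, e⟩, hm⟩, h0⟩ ⟨⟨⟨n', e'⟩, hm'⟩, h0'⟩ h
    simp only [Subtype.mk.injEq, Prod.mk.injEq] at *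
    exact ⟨h, h0.trans h0'.symm⟩
  · rintro ⟨n, hn⟩
    exact ⟨⟨⟨⟨n, 0⟩, by simp [mem_fiberSub, hn]⟩, rfl⟩, rfl⟩
  · rintro e ⟨n, hn⟩
    exact ⟨⟨⟨n, e⟩, hn⟩, rfl⟩
end

section
/- Let (α, β) : (∂ : N → S) → (∂ : M → R) be a morphism of crossed bimodules. Equip E = S ⊕ M with the multiplication (s, m)(s', m') = (ss', α(s)m' + m α(s') + m·∂m'), where M is an S-bimodule via α. Define ι(m) = (0, m), π(s, m) = s, κ(n) = (∂n, −β(n)), j(s, m) = α(s) + ∂m. Then E is an associative ring, π and j are ring homomorphisms, 0 → M → E → S → 0 is exact, j∘κ = 0, and the four butterfly compatibility conditions hold; i.e., these data form a bimodule butterfly from (N → S) to (M → R), split by the ring homomorphism σ = (id_S, 0) : S → E. -/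
/-!
`E = S ⊕ M` is the semidirect product of `S` with the non-unital ring `(M, m · m' = m ∂m')`, on
which `S` acts through `α`; associativity and distributivity only need the bimodule axioms and
`∂` being a bimodule map, and `∂` turns `j` into a ring map. The Pfeiffer identity
`(∂m)m' = m(∂m')`, transported along `∂β = α∂`, is what lets `E` act on `ι(M)` from the left and on
`κ(N)` from the right through `j` and `π`.
-/

namespace BimoduleStr

variable {R M : Type*} [Ring R] [AddCommGroup M] (B : BimoduleStr R M)

theorem sl_zero (r : R) : B.sl r 0 = 0 :=
  (AddMonoidHom.mk' (B.sl r) (B.sl_add r)).map_zero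

theorem zero_sl (m : M) : B.sl 0 m = 0 :=
  (AddMonoidHom.mk' (B.sl · m) (B.add_sl · · m)).map_zero

theorem sr_zero (m : M) : B.sr m 0 = 0 :=
  (AddMonoidHom.mk' (B.sr m) (B.add_sr m)).map_zero

theorem zero_sr (r : R) : B.sr 0 r = 0 :=
  (AddMonoidHom.mk' (B.sr · r) (B.sr_add · · r)).map_zero

theorem sl_neg (r : R) (m : M) : B.sl r (-m) = -B.sl r m :=
  (AddMonoidHom.mk' (B.sl r) (B.sl_add r)).map_neg m

theorem sr_neg (m : M) (r : R) : B.sr m (-r) = -B.sr m r :=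
  (AddMonoidHom.mk' (B.sr m) (B.add_sr m)).map_neg r

theorem neg_sr (m : M) (r : R) : B.sr (-m) r = -B.sr m r :=
  (AddMonoidHom.mk' (B.sr · r) (B.sr_add · · r)).map_neg m

end BimoduleStr

namespace CrossedBimodule

variable {S R M : Type*} [Ring S] [Ring R] [AddCommGroup M] (CR : CrossedBimodule R M)
  (α : S →+* R)

def semidirectMul (p q : S × M) : S × M :=
  (p.1 * q.1, CR.sl (α p.1) q.2 + CR.sr p.2 (α q.1) + CR.sr p.2 (CR.d q.2))

def semidirectLift (p : S × M) : R :=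
  α p.1 + CR.d p.2

theorem semidirectMul_assoc (p q u : S × M) :
    CR.semidirectMul α (CR.semidirectMul α p q) u =
      CR.semidirectMul α p (CR.semidirectMul α q u) := by
  simp only [semidirectMul, Prod.mk.injEq, mul_assoc, true_and, map_mul, map_add, CR.sl_add,
    CR.sr_add, CR.add_sr, CR.mul_sl, CR.mul_sr, CR.sl_sr, CR.d_sl, CR.d_sr]
  abel

theorem one_semidirectMul (p : S × M) : CR.semidirectMul α (1, 0) p = p := by
  simp [semidirectMul, CR.one_sl, CR.zero_sr]

theorem semidirectMul_one (p : S × M) : CR.semidirectMul α p (1, 0) = p := by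
  simp [semidirectMul, CR.one_sr, CR.sl_zero, CR.sr_zero]

theorem semidirectMul_add (p q u : S × M) :
    CR.semidirectMul α p (q + u) = CR.semidirectMul α p q + CR.semidirectMul α p u := by
  simp only [semidirectMul, Prod.fst_add, Prod.snd_add, Prod.mk_add_mk, Prod.mk.injEq, mul_add,
    true_and, CR.sl_add, CR.add_sr, map_add]
  abel

theorem add_semidirectMul (p q u : S × M) :
    CR.semidirectMul α (p + q) u = CR.semidirectMul α p u + CR.semidirectMul α q u := by
  simp only [semidirectMul, Prod.fst_add, Prod.snd_add, Prod.mk_add_mk, Prod.mk.injEq, add_mul,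
    true_and, CR.add_sl, CR.sr_add, map_add]
  abel

theorem semidirectLift_mul (p q : S × M) :
    CR.semidirectLift α (CR.semidirectMul α p q) =
      CR.semidirectLift α p * CR.semidirectLift α q := by
  simp only [semidirectLift, semidirectMul, map_mul, map_add, CR.d_sl, CR.d_sr]
  noncomm_ring

theorem semidirectLift_add (p q : S × M) :
    CR.semidirectLift α (p + q) = CR.semidirectLift α p + CR.semidirectLift α q := by
  simp only [semidirectLift, Prod.fst_add, Prod.snd_add, map_add]
  abel

theorem zero_mk_semidirectMul (m : M) (p : S × M) :
    CR.semidirectMul α (0, m) p = (0, CR.sr m (CR.semidirectLift α p)) := by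
  simp [semidirectMul, semidirectLift, CR.zero_sl, CR.add_sr]

theorem semidirectMul_zero_mk (p : S × M) (m : M) :
    CR.semidirectMul α p (0, m) = (0, CR.sl (CR.semidirectLift α p) m) := by
  simp [semidirectMul, semidirectLift, CR.sr_zero, CR.add_sl, CR.pfeiffer]

theorem semidirectMul_zero_mk_zero (s s' : S) :
    CR.semidirectMul α (s, 0) (s', 0) = (s * s', 0) := by
  simp [semidirectMul, CR.sl_zero, CR.zero_sr]

variable {N : Type*} [AddCommGroup N] (CS : CrossedBimodule S N) (β : N →+ M)

theorem d_neg_semidirectMul (hd : ∀ n, CR.d (β n) = α (CS.d n))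
    (heqr : ∀ n s, β (CS.sr n s) = CR.sr (β n) (α s)) (n : N) (p : S × M) :
    CR.semidirectMul α (CS.d n, -β n) p = (CS.d (CS.sr n p.1), -β (CS.sr n p.1)) := by
  simp only [semidirectMul, Prod.mk.injEq, CS.d_sr, heqr, CR.neg_sr, true_and]
  rw [← hd n, ← CR.pfeiffer]
  abel

theorem semidirectMul_d_neg (hd : ∀ n, CR.d (β n) = α (CS.d n))
    (heql : ∀ s n, β (CS.sl s n) = CR.sl (α s) (β n)) (p : S × M) (n : N) :
    CR.semidirectMul α p (CS.d n, -β n) = (CS.d (CS.sl p.1 n), -β (CS.sl p.1 n)) := by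
  simp only [semidirectMul, Prod.mk.injEq, CS.d_sl, heql, CR.sl_neg, true_and]
  rw [← hd n, map_neg, CR.sr_neg]
  abel

end CrossedBimodule

/-- a morphism `(α, β)` of crossed bimodules gives rise to a split bimodule
butterfly with centerpiece `E = S ⊕ M`, product `(s,m)(s',m') = (ss', α(s)m' + mα(s') + m∂m')`,
and structure maps `ι(m) = (0,m)`, `π(s,m) = s`, `κ(n) = (∂n, −β(n))`, `j(s,m) = α(s) + ∂m`,
split by the ring homomorphism `σ = (id_S, 0)`. -/
theorem stmt16 {S N R M : Type*} [Ring S] [AddCommGroup N] [Ring R] [AddCommGroup M]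
    (CS : CrossedBimodule S N) (CR : CrossedBimodule R M)
    (α : S →+* R) (β : N →+ M)
    (hd : ∀ n, CR.d (β n) = α (CS.d n))
    (heql : ∀ s n, β (CS.sl s n) = CR.sl (α s) (β n))
    (heqr : ∀ n s, β (CS.sr n s) = CR.sr (β n) (α s)) :
    let mul : S × M → S × M → S × M := fun p q =>
      (p.1 * q.1, CR.sl (α p.1) q.2 + CR.sr p.2 (α q.1) + CR.sr p.2 (CR.d q.2))
    let ι : M → S × M := fun m => (0, m)
    let π : S × M → S := fun p => p.1
    let κ : N → S × M := fun n => (CS.d n, -(β n))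
    let j : S × M → R := fun p => α p.1 + CR.d p.2
    -- `E = S ⊕ M` is an associative unital ring
    (∀ p q u, mul (mul p q) u = mul p (mul q u)) ∧
    (∀ p, mul (1, 0) p = p) ∧ (∀ p, mul p (1, 0) = p) ∧
    (∀ p q u, mul p (q + u) = mul p q + mul p u) ∧
    (∀ p q u, mul (p + q) u = mul p u + mul q u) ∧
    -- `π` and `j` are ring homomorphisms
    (∀ p q, π (mul p q) = π p * π q) ∧ (∀ p q, π (p + q) = π p + π q) ∧ π (1, 0) = 1 ∧
    (∀ p q, j (mul p q) = j p * j q) ∧ (∀ p q, j (p + q) = j p + j q) ∧ j (1, 0) = 1 ∧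
    -- `0 → M → E → S → 0` is exact
    Function.Injective ι ∧ (∀ p, π p = 0 ↔ ∃ m, ι m = p) ∧ Function.Surjective π ∧
    -- `N → E → R` is a complex, compatible with the differentials
    (∀ n, j (κ n) = 0) ∧ (∀ n, π (κ n) = CS.d n) ∧ (∀ m, j (ι m) = CR.d m) ∧
    -- the four butterfly compatibility conditions
    (∀ m p, ι (CR.sr m (j p)) = mul (ι m) p) ∧
    (∀ m p, ι (CR.sl (j p) m) = mul p (ι m)) ∧
    (∀ n p, κ (CS.sr n (π p)) = mul (κ n) p) ∧
    (∀ n p, κ (CS.sl (π p) n) = mul p (κ n)) ∧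
    -- `σ = (id_S, 0)` is a splitting ring homomorphism
    (∀ s s', mul (s, 0) (s', 0) = ((s * s' : S), (0 : M))) ∧
    (∀ s s' : S, ((s, 0) : S × M) + (s', 0) = (s + s', 0)) ∧
    (∀ s : S, π (s, 0) = s) := by
  intro mul ι π κ j
  have exact_at_E (p : S × M) : π p = 0 ↔ ∃ m, ι m = p :=
    ⟨fun h => ⟨p.2, Prod.ext h.symm rfl⟩, fun ⟨_, hm⟩ => hm ▸ rfl⟩
  refine ⟨CR.semidirectMul_assoc α, CR.one_semidirectMul α, CR.semidirectMul_one α,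
    CR.semidirectMul_add α, CR.add_semidirectMul α, fun _ _ => rfl, fun _ _ => rfl, rfl,
    CR.semidirectLift_mul α, CR.semidirectLift_add α, by simp [j],
    fun _ _ h => congrArg Prod.snd h, exact_at_E, fun s => ⟨(s, 0), rfl⟩,
    fun n => by simp [j, κ, hd n], fun _ => rfl, fun m => by simp [j, ι],
    fun m p => (CR.zero_mk_semidirectMul α m p).symm,
    fun m p => (CR.semidirectMul_zero_mk α p m).symm,
    fun n p => (CR.d_neg_semidirectMul α CS β hd heqr n p).symm,
    fun n p => (CR.semidirectMul_d_neg α CS β hd heql p n).symm,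
    CR.semidirectMul_zero_mk_zero α, fun _ _ => by simp, fun _ => rfl⟩
end

section
/- Let (α, β), (α', β') : (N → S) → (M → R) be morphisms of crossed bimodules and h : S → M a homotopy from (α', β') to (α, β). Then ψ given explicitly by ψ(s, m) = (s, m + h(s)) is a ring isomorphism from the split-butterfly ring E = S ⊕ M (with product built from (α, β)) to the split-butterfly ring E' = S ⊕ M (with product built from (α', β')), compatible with the structure maps ι, π, κ, j of both butterflies. Conversely, any such butterfly isomorphism ψ between the two split butterflies has the form ψ(s, m) = (s, m + h(s)) for a unique homotopy h. -/
section Helpers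
variable {R : Type*} {M : Type*} [Ring R] [AddCommGroup M] (B : BimoduleStr R M)

lemma sl_zero (r : R) : B.sl r 0 = 0 := by
  have := B.sl_add r 0 0; simpa using this.symm

lemma sr_zero (r : R) : B.sr 0 r = 0 := by
  have := B.sr_add 0 0 r; simpa using this.symm

lemma sl_neg (r : R) (m : M) : B.sl r (-m) = -B.sl r m := by
  have := B.sl_add r m (-m); rw [add_neg_cancel, sl_zero] at this
  linear_combination (norm := abel) -this

lemma sr_neg (r : R) (m : M) : B.sr (-m) r = -B.sr m r := by
  have := B.sr_add m (-m) r; rw [add_neg_cancel, sr_zero] at this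
  linear_combination (norm := abel) -this

lemma sub_sl (r r' : R) (m : M) : B.sl (r - r') m = B.sl r m - B.sl r' m := by
  have h := B.add_sl r' (r - r') m; rw [add_sub_cancel] at h
  have h2 := B.add_sl r (-r) m
  rw [add_neg_cancel] at h2
  have hz : B.sl (0:R) m = 0 := by
    have := B.add_sl 0 0 m; simpa using this.symm
  rw [hz] at h2
  have hneg : B.sl (-r') m = -B.sl r' m := by
    have := B.add_sl r' (-r') m; rw [add_neg_cancel, hz] at this
    linear_combination (norm := abel) -this
  rw [sub_eq_add_neg, B.add_sl, hneg, ← sub_eq_add_neg]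

lemma sr_sub (m : M) (r r' : R) : B.sr m (r - r') = B.sr m r - B.sr m r' := by
  have hz : B.sr m (0:R) = 0 := by
    have := B.add_sr m 0 0; simpa using this.symm
  have hneg : B.sr m (-r') = -B.sr m r' := by
    have := B.add_sr m r' (-r'); rw [add_neg_cancel, hz] at this
    linear_combination (norm := abel) -this
  rw [sub_eq_add_neg, B.add_sr, hneg, ← sub_eq_add_neg]

end Helpers

/-- a homotopy `h : (α', β') ⇒ (α, β)` of morphisms of crossed bimodules
determines a butterfly isomorphism `ψ(s, m) = (s, m + h(s))` between the associated split
butterflies on `E = E' = S ⊕ M`, and conversely every butterfly isomorphism between the two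
split butterflies has this form for a unique homotopy `h`. -/
theorem stmt17 {S N R M : Type*} [Ring S] [AddCommGroup N] [Ring R] [AddCommGroup M]
    (CS : CrossedBimodule S N) (CR : CrossedBimodule R M)
    (α α' : S →+* R) (β β' : N →+ M)
    -- `(α, β)` and `(α', β')` are morphisms of crossed bimodules
    (hd : ∀ n, CR.d (β n) = α (CS.d n))
    (heql : ∀ s n, β (CS.sl s n) = CR.sl (α s) (β n))
    (heqr : ∀ n s, β (CS.sr n s) = CR.sr (β n) (α s))
    (hd' : ∀ n, CR.d (β' n) = α' (CS.d n))
    (heql' : ∀ s n, β' (CS.sl s n) = CR.sl (α' s) (β' n))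
    (heqr' : ∀ n s, β' (CS.sr n s) = CR.sr (β' n) (α' s)) :
    -- the two split butterflies
    let mul : S × M → S × M → S × M := fun p q =>
      (p.1 * q.1, CR.sl (α p.1) q.2 + CR.sr p.2 (α q.1) + CR.sr p.2 (CR.d q.2))
    let mul' : S × M → S × M → S × M := fun p q =>
      (p.1 * q.1, CR.sl (α' p.1) q.2 + CR.sr p.2 (α' q.1) + CR.sr p.2 (CR.d q.2))
    let ι : M → S × M := fun m => (0, m)
    let π : S × M → S := fun p => p.1
    let κ : N → S × M := fun n => (CS.d n, -(β n))
    let κ' : N → S × M := fun n => (CS.d n, -(β' n))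
    let j : S × M → R := fun p => α p.1 + CR.d p.2
    let j' : S × M → R := fun p => α' p.1 + CR.d p.2
    -- forward direction: a homotopy gives a butterfly isomorphism
    (∀ h : S →+ M,
      (∀ s, α' s - α s = -(CR.d (h s))) →
      (∀ n, β' n - β n = -(h (CS.d n))) →
      (∀ s s', h (s * s')
          = CR.sl (α s) (h s') + CR.sr (h s) (α s') - CR.sr (h s) (CR.d (h s'))) →
      (let ψ : S × M → S × M := fun p => (p.1, p.2 + h p.1)
       (∀ p q, ψ (p + q) = ψ p + ψ q) ∧
       (∀ p q, ψ (mul p q) = mul' (ψ p) (ψ q)) ∧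
       Function.Bijective ψ ∧
       (∀ m, ψ (ι m) = ι m) ∧ (∀ p, π (ψ p) = π p) ∧
       (∀ n, ψ (κ n) = κ' n) ∧ (∀ p, j' (ψ p) = j p))) ∧
    -- converse: every butterfly isomorphism between the split butterflies is of this form
    (∀ ψ : S × M → S × M,
      (∀ p q, ψ (p + q) = ψ p + ψ q) →
      (∀ p q, ψ (mul p q) = mul' (ψ p) (ψ q)) →
      Function.Bijective ψ →
      (∀ m, ψ (ι m) = ι m) → (∀ p, π (ψ p) = π p) →
      (∀ n, ψ (κ n) = κ' n) → (∀ p, j' (ψ p) = j p) →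
      ∃ h : S →+ M,
        (∀ s, α' s - α s = -(CR.d (h s))) ∧
        (∀ n, β' n - β n = -(h (CS.d n))) ∧
        (∀ s s', h (s * s')
            = CR.sl (α s) (h s') + CR.sr (h s) (α s') - CR.sr (h s) (CR.d (h s'))) ∧
        (∀ s m, ψ (s, m) = (s, m + h s)) ∧
        (∀ h' : S →+ M, (∀ s m, ψ (s, m) = (s, m + h' s)) → h' = h)) := by
  intro mul mul' ι π κ κ' j j'
  constructor
  · -- forward direction
    intro h hα hβ hmul
    intro ψ
    have hα' : ∀ s, α' s = α s - CR.d (h s) := by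
      intro s
      have := hα s
      rw [sub_eq_iff_eq_add] at this
      rw [this]; abel
    have hβ2 : ∀ n, h (CS.d n) = β n - β' n := by
      intro n
      have := hβ n
      rw [sub_eq_iff_eq_add] at this
      rw [this]; abel
    refine ⟨?_, ?_, ?_, ?_, ?_, ?_, ?_⟩
    · rintro ⟨a, b⟩ ⟨c, d⟩
      simp only [ψ, Prod.mk_add_mk, map_add, Prod.mk.injEq]
      exact ⟨trivial, by abel⟩
    · rintro ⟨s, m⟩ ⟨s', m'⟩
      simp only [ψ, mul, mul', Prod.mk.injEq]
      refine ⟨trivial, ?_⟩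
      simp only [hmul s s', hα' s, hα' s', sub_sl, sr_sub, CR.pfeiffer,
        CR.toBimoduleStr.sl_add, CR.toBimoduleStr.sr_add,
        CR.toBimoduleStr.add_sr, map_add]
      abel
    · refine Function.bijective_iff_has_inverse.mpr
        ⟨fun p => (p.1, p.2 - h p.1), fun p => by simp [ψ], fun p => by simp [ψ]⟩
    · intro m; simp [ψ, ι]
    · intro p; rfl
    · intro n
      simp only [ψ, κ, κ']
      refine Prod.ext rfl ?_
      simp only
      rw [hβ2 n]; abel
    · intro p
      simp only [ψ, j, j', map_add, hα' p.1]
      abel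
  · -- converse
    intro ψ hadd hmul hbij hι hπ hκ hj
    have hι2 : ∀ m : M, ψ (0, m) = (0, m) := hι
    have hfst : ∀ p : S × M, (ψ p).1 = p.1 := hπ
    set hf : S → M := fun s => (ψ (s, 0)).2 with hfdef
    have hform : ∀ s m, ψ (s, m) = (s, m + hf s) := by
      intro s m
      have e : ((s, m) : S × M) = (s, 0) + (0, m) := by simp
      rw [e, hadd, hι2]
      refine Prod.ext ?_ ?_
      · simpa using hfst (s, 0)
      · show (ψ (s, 0)).2 + m = m + (ψ (s, 0)).2
        exact add_comm _ _
    have hfadd : ∀ s s', hf (s + s') = hf s + hf s' := by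
      intro s s'
      have e : ((s + s', (0:M)) : S × M) = (s, 0) + (s', 0) := by simp
      have h2 := congrArg Prod.snd (by rw [← hadd, ← e] : ψ (s, 0) + ψ (s', 0) = ψ (s + s', 0))
      simpa [hfdef] using h2.symm
    set h : S →+ M := AddMonoidHom.mk' hf hfadd with hdef
    have hh : ∀ s, h s = hf s := fun s => rfl
    have hαh : ∀ s, α' s - α s = -(CR.d (h s)) := by
      intro s
      have := hj (s, (0:M))
      rw [hform s 0] at this
      simp only [j, j', map_add, map_zero, add_zero, zero_add] at this
      rw [hh, sub_eq_iff_eq_add, ← this]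
      abel
    have hα' : ∀ s, α' s = α s - CR.d (hf s) := by
      intro s
      have := hαh s
      rw [hh, sub_eq_iff_eq_add] at this
      rw [this]; abel
    have hβh : ∀ n, β' n - β n = -(h (CS.d n)) := by
      intro n
      have := hκ n
      rw [hform (CS.d n) (-(β n))] at this
      have h2 := congrArg Prod.snd this
      simp only [κ'] at h2
      rw [hh]
      linear_combination (norm := abel) h2
    have hhmul : ∀ s s', h (s * s')
        = CR.sl (α s) (h s') + CR.sr (h s) (α s') - CR.sr (h s) (CR.d (h s')) := by
      intro s s'
      have key := hmul (s, (0:M)) (s', (0:M))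
      simp only [mul, mul', hform, sl_zero, sr_zero, map_zero, add_zero,
        zero_add] at key
      have h2 := congrArg Prod.snd key
      simp only at h2
      simp only [hh]
      rw [h2, hα' s, hα' s', sub_sl, sr_sub, CR.pfeiffer]
      abel
    refine ⟨h, hαh, hβh, hhmul, ?_, ?_⟩
    · intro s m; rw [hform s m]; rfl
    · intro h' hh'
      ext s
      have := hh' s 0
      rw [hform s 0] at this
      have h2 := congrArg Prod.snd this
      simp only [zero_add] at h2
      simpa [hh] using h2.symm
end

section
/- Let [S_•, E, R_•] be a bimodule butterfly whose underlying extension 0 → M → E →^π S → 0 admits a ring-homomorphism splitting σ : S → E. Then E is isomorphic, as a butterfly, to the split butterfly arising from the morphism of crossed bimodules (α, β) where α = j∘σ : S → R and β : N → M is determined by ι(β(n)) = σ(∂n) − κ(n). In particular (α, β) satisfies ∂∘β = α∘∂ and β(s₀ n s₁) = α(s₀)β(n)α(s₁). -/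
/-- a bimodule butterfly whose extension admits a ring-homomorphism splitting
`σ : S → E` is isomorphic, as a butterfly, to the split butterfly of the morphism of crossed
bimodules `(α, β)` with `α = j∘σ` and `β` determined by `ι(β(n)) = σ(∂n) − κ(n)`; in
particular `(α, β)` is a morphism of crossed bimodules, and `(s, m) ↦ σ(s) + ι(m)` is an
isomorphism of butterflies from the split butterfly to `E`. -/
theorem stmt19 {S N R M E : Type*} [Ring S] [AddCommGroup N] [Ring R] [AddCommGroup M]
    [Ring E] (CS : CrossedBimodule S N) (CR : CrossedBimodule R M)
    (B : Butterfly CS CR E)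
    (σ : S →+* E) (hσ : ∀ s, B.π (σ s) = s) :
    ∃ β : N →+ M,
      -- `β` is determined by `ι(β n) = σ(∂n) − κ(n)`
      (∀ n, B.ι (β n) = σ (CS.d n) - B.κ n) ∧
      -- `(α, β)` with `α = j ∘ σ` is a morphism of crossed bimodules
      (∀ n, CR.d (β n) = B.j (σ (CS.d n))) ∧
      (∀ s n, β (CS.sl s n) = CR.sl (B.j (σ s)) (β n)) ∧
      (∀ n s, β (CS.sr n s) = CR.sr (β n) (B.j (σ s))) ∧
      -- `(s, m) ↦ σ(s) + ι(m)` is an isomorphism of butterflies from the split butterfly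
      (let Θ : S × M → E := fun p => σ p.1 + B.ι p.2
       Function.Bijective Θ ∧
       (∀ p q : S × M, Θ (p + q) = Θ p + Θ q) ∧
       (∀ p q : S × M, Θ p * Θ q = Θ (p.1 * q.1,
          CR.sl (B.j (σ p.1)) q.2 + CR.sr p.2 (B.j (σ q.1)) + CR.sr p.2 (CR.d q.2))) ∧
       (∀ p, B.π (Θ p) = p.1) ∧
       (∀ p, B.j (Θ p) = B.j (σ p.1) + CR.d p.2) ∧
       (∀ m, Θ (0, m) = B.ι m) ∧
       (∀ n, Θ (CS.d n, -(β n)) = B.κ n)) := by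
  classical
  have hπι : ∀ m, B.π (B.ι m) = 0 := fun m => (B.exact _).mpr ⟨m, rfl⟩
  have hex : ∀ n, ∃ m, B.ι m = σ (CS.d n) - B.κ n := by
    intro n
    apply (B.exact _).mp
    simp [hσ, B.πκ]
  choose b hb using hex
  have hbadd : ∀ n n', b (n + n') = b n + b n' := by
    intro n n'
    apply B.ι_inj
    rw [map_add B.ι, hb, hb, hb]
    simp only [map_add]
    abel
  refine ⟨AddMonoidHom.mk' b hbadd, hb, ?_, ?_, ?_, ?_⟩
  · intro n
    have := B.jι (b n)
    rw [hb, map_sub, B.jκ, sub_zero] at this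
    exact this.symm
  · intro s n
    apply B.ι_inj
    rw [B.compat₂]
    show B.ι (b (CS.sl s n)) = σ s * B.ι (b n)
    rw [hb, hb]
    have h4 := B.compat₄ n (σ s)
    rw [hσ] at h4
    rw [CS.d_sl, map_mul, h4, mul_sub]
  · intro n s
    apply B.ι_inj
    rw [B.compat₁]
    show B.ι (b (CS.sr n s)) = B.ι (b n) * σ s
    rw [hb, hb]
    have h3 := B.compat₃ n (σ s)
    rw [hσ] at h3
    rw [CS.d_sr, map_mul, h3, sub_mul]
  · intro Θ
    have hπΘ : ∀ p : S × M, B.π (Θ p) = p.1 := by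
      intro p; simp [Θ, map_add, hσ, hπι]
    refine ⟨⟨?_, ?_⟩, ?_, ?_, hπΘ, ?_, ?_, ?_⟩
    · intro p q h
      have h1 : p.1 = q.1 := by rw [← hπΘ p, ← hπΘ q, h]
      have h2 : B.ι p.2 = B.ι q.2 := by
        simp only [Θ, h1] at h
        exact add_left_cancel h
      exact Prod.ext h1 (B.ι_inj h2)
    · intro e
      obtain ⟨m, hm⟩ := (B.exact (e - σ (B.π e))).mp (by simp [map_sub, hσ])
      exact ⟨(B.π e, m), by simp [Θ, hm]⟩
    · intro p q; simp [Θ, map_add]; abel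
    · intro p q
      show (σ p.1 + B.ι p.2) * (σ q.1 + B.ι q.2) =
        σ (p.1 * q.1) + B.ι (CR.sl (B.j (σ p.1)) q.2 + CR.sr p.2 (B.j (σ q.1))
          + CR.sr p.2 (CR.d q.2))
      rw [map_add B.ι, map_add B.ι, B.compat₂, ← B.jι q.2, B.compat₁, B.compat₁,
        map_mul, mul_add, add_mul, add_mul]
      abel
    · intro p; simp [Θ, map_add, B.jι]
    · intro m; simp [Θ]
    · intro n
      show σ (CS.d n) + B.ι (-(b n)) = B.κ n
      rw [map_neg, hb n]
      abel
end
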